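/- Let 𝔻 be a relative entropy, n ∈ ℕ and p ∈ P(n). Then for all q, q̃ ∈ P_{>0}(n) satisfying ‖q − q̃‖_∞ < min{min_i q_i, min_i q̃_i}: |𝔻(p‖q) − 𝔻(p‖q̃)| ≤ log( 1 + ‖q − q̃‖_∞ / min{min_i q_i, min_i q̃_i} ), where ‖q − q̃‖_∞ = max_{i∈[n]} |q_i − q̃_i|. In particular, both 𝔻(p‖q) and 𝔻(p‖q̃) are finite at such points and q ↦ 𝔻(p‖q) is continuous on P_{>0}(n). -/

import Mathlib

open scoped BigOperators ENNReal

/-- A probability vector: nonnegative entries summing to 1. -/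
def IsProbVec {n : ℕ} (p : Fin n → ℝ) : Prop :=
  (∀ i, 0 ≤ p i) ∧ ∑ i, p i = 1

/-- The uniform probability vector on `n` outcomes. -/
noncomputable def uniform (n : ℕ) : Fin n → ℝ := fun _ => (n : ℝ)⁻¹

/-- Kronecker (tensor) product of two vectors. -/
noncomputable def kron {n m : ℕ} (p : Fin n → ℝ) (q : Fin m → ℝ) : Fin (n * m) → ℝ :=
  fun i => p (finProdFinEquiv.symm i).1 * q (finProdFinEquiv.symm i).2

/-- Sum of the `k` largest entries (for vectors with nonnegative entries):
the supremum of sums over subsets of at most `k` indices. -/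
noncomputable def maxPartialSum {n : ℕ} (p : Fin n → ℝ) (k : ℕ) : ℝ :=
  sSup { x | ∃ s : Finset (Fin n), s.card ≤ k ∧ ∑ i ∈ s, p i = x }

/-- `p` majorises `q`: every partial sum of the `k` largest entries of `p`
dominates that of `q` (entries beyond a vector's length count as 0). -/
def Majorizes {n m : ℕ} (p : Fin n → ℝ) (q : Fin m → ℝ) : Prop :=
  ∀ k : ℕ, maxPartialSum q k ≤ maxPartialSum p k

/-- A channel: an `n × m` row-stochastic matrix. -/
def IsStochastic {n m : ℕ} (W : Matrix (Fin n) (Fin m) ℝ) : Prop :=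
  (∀ i j, 0 ≤ W i j) ∧ ∀ i, ∑ j, W i j = 1

/-- Relative majorisation of pairs: some channel maps `(p, q)` to `(p', q')`. -/
def RelMaj {n m : ℕ} (p q : Fin n → ℝ) (p' q' : Fin m → ℝ) : Prop :=
  ∃ W : Matrix (Fin n) (Fin m) ℝ, IsStochastic W ∧
    Matrix.vecMul p W = p' ∧ Matrix.vecMul q W = q'

/-- An entropy: a `[0,∞)`-valued function on probability vectors of all finite dimensions
that is monotone under mixing (majorisation), additive for Kronecker products,
and normalised so that `H(u₂) = log 2` (binary logarithm). -/
structure IsEntropy (H : (n : ℕ) → (Fin n → ℝ) → ℝ) : Prop where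
  nonneg : ∀ {n : ℕ} (p : Fin n → ℝ), IsProbVec p → 0 ≤ H n p
  mono : ∀ {n m : ℕ} (p : Fin n → ℝ) (p' : Fin m → ℝ),
    IsProbVec p → IsProbVec p' → Majorizes p p' → H n p ≤ H m p'
  additive : ∀ {n m : ℕ} (p : Fin n → ℝ) (q : Fin m → ℝ),
    IsProbVec p → IsProbVec q → H (n * m) (kron p q) = H n p + H m q
  normalized : H 2 (uniform 2) = Real.logb 2 2

/-- A monotone divergence: a `[0,∞]`-valued function on pairs of probability vectors of
equal finite dimension satisfying the data-processing inequality and `𝔻(1‖1) = 0`. -/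
structure IsMonotoneDivergence (D : (n : ℕ) → (Fin n → ℝ) → (Fin n → ℝ) → ℝ≥0∞) : Prop where
  dpi : ∀ {n m : ℕ} (p q : Fin n → ℝ) (p' q' : Fin m → ℝ),
    IsProbVec p → IsProbVec q → IsProbVec p' → IsProbVec q' →
    RelMaj p q p' q' → D m p' q' ≤ D n p q
  normalized : D 1 (fun _ => 1) (fun _ => 1) = 0

/-- A relative entropy: data-processing inequality, additivity for Kronecker products,
and the normalisation `𝔻(e₁‖u₂) = log 2` (binary logarithm). -/
structure IsRelativeEntropy (D : (n : ℕ) → (Fin n → ℝ) → (Fin n → ℝ) → ℝ≥0∞) : Prop where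
  dpi : ∀ {n m : ℕ} (p q : Fin n → ℝ) (p' q' : Fin m → ℝ),
    IsProbVec p → IsProbVec q → IsProbVec p' → IsProbVec q' →
    RelMaj p q p' q' → D m p' q' ≤ D n p q
  additive : ∀ {n m : ℕ} (p₁ q₁ : Fin n → ℝ) (p₂ q₂ : Fin m → ℝ),
    IsProbVec p₁ → IsProbVec q₁ → IsProbVec p₂ → IsProbVec q₂ →
    D (n * m) (kron p₁ p₂) (kron q₁ q₂) = D n p₁ q₁ + D m p₂ q₂
  normalized : D 2 ![1, 0] ![1/2, 1/2] = ENNReal.ofReal (Real.logb 2 2)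

/-- The `∞`-norm distance `‖q − q̃‖_∞ = max_i |q_i − q̃_i|`. -/
noncomputable def supDist {n : ℕ} (q q' : Fin n → ℝ) : ℝ :=
  sSup { x | ∃ i, x = |q i - q' i| }

/-- The smallest entry `min_i q_i` of a vector. -/
noncomputable def minEntry {n : ℕ} (q : Fin n → ℝ) : ℝ :=
  sInf { x | ∃ i, x = q i }

/-!
Everything follows from data processing against two kinds of reference pairs. By additivity
`𝔻(e₁^{⊗k}‖u₂^{⊗k}) = k`, and this pair is a point mass against the weight `2^{-k}`, so it can
be processed into any `(p, q)` with `2^{-k} p ≤ q`. Hence `𝔻(p‖q) < ∞` for positive `q`, and,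
applied to tensor powers of `(e₁, (c, 1 - c))`, `𝔻(e₁‖(c, 1 - c)) ≤ log c⁻¹`. If `c q ≤ q̃`,
then `(p ⊗ e₁, q ⊗ (c, 1 - c))` can be processed into `(p, q̃)`, so additivity gives
`𝔻(p‖q̃) ≤ 𝔻(p‖q) + log c⁻¹`. For `c = (1 + ‖q - q̃‖_∞ / μ)⁻¹`, with `μ` below all entries of
`q` and `q̃`, this holds in both directions, which is the estimate; continuity follows from it.
-/

open Finset

lemma supDist_eq_dist {n : ℕ} (q q' : Fin n → ℝ) : supDist q q' = dist q q' := by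
  have hle : ∀ x ∈ { x | ∃ i, x = |q i - q' i| }, x ≤ dist q q' := by
    rintro x ⟨i, rfl⟩
    exact dist_le_pi_dist q q' i
  refine le_antisymm (Real.sSup_le hle dist_nonneg) ?_
  refine (dist_pi_le_iff (Real.sSup_nonneg ?_)).2 fun i => ?_
  · rintro x ⟨i, rfl⟩
    exact abs_nonneg _
  · exact le_csSup ⟨dist q q', hle⟩ ⟨i, rfl⟩

lemma minEntry_eq_sInf_range {n : ℕ} (q : Fin n → ℝ) : minEntry q = sInf (Set.range q) := by
  simp only [minEntry, Set.range, eq_comm]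

lemma minEntry_le {n : ℕ} (q : Fin n → ℝ) (i : Fin n) : minEntry q ≤ q i := by
  rw [minEntry_eq_sInf_range]
  exact csInf_le (Set.finite_range q).bddBelow (Set.mem_range_self i)

lemma minEntry_pos {n : ℕ} [Nonempty (Fin n)] {q : Fin n → ℝ} (hq : ∀ i, 0 < q i) :
    0 < minEntry q := by
  obtain ⟨i₀, hi₀⟩ := Finite.exists_min q
  rw [minEntry_eq_sInf_range]
  exact (hq i₀).trans_le (le_csInf (Set.range_nonempty q) (by rintro _ ⟨i, rfl⟩; exact hi₀ i))

namespace IsProbVec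

variable {n : ℕ} {p q : Fin n → ℝ}

lemma nonempty (hp : IsProbVec p) : Nonempty (Fin n) := by
  refine Fin.pos_iff_nonempty.1 (Nat.pos_of_ne_zero ?_)
  rintro rfl
  simpa using hp.2

lemma le_one (hp : IsProbVec p) (i : Fin n) : p i ≤ 1 :=
  hp.2 ▸ single_le_sum (fun j _ => hp.1 j) (mem_univ i)

lemma eq_of_le (hp : IsProbVec p) (hq : IsProbVec q) (h : ∀ i, p i ≤ q i) : p = q := by
  by_contra hne
  obtain ⟨i, hi⟩ := Function.ne_iff.1 hne
  have := sum_lt_sum (fun j _ => h j) ⟨i, mem_univ i, (h i).lt_of_ne hi⟩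
  rw [hp.2, hq.2] at this
  exact this.false

/-- The residual `r` in the decomposition `q = a • p + (1 - a) • r`. -/
lemma residual {a : ℝ} (hp : IsProbVec p) (hq : IsProbVec q) (ha : a < 1)
    (h : ∀ j, a * p j ≤ q j) : IsProbVec fun j => (q j - a * p j) / (1 - a) := by
  have ha' : 0 < 1 - a := sub_pos.2 ha
  refine ⟨fun j => div_nonneg (sub_nonneg.2 (h j)) ha'.le, ?_⟩
  rw [← sum_div, sum_sub_distrib, ← mul_sum, hp.2, hq.2, mul_one, div_self ha'.ne']

end IsProbVec

lemma isProbVec_pair {c : ℝ} (h0 : 0 ≤ c) (h1 : c ≤ 1) : IsProbVec ![c, 1 - c] :=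
  ⟨fun i => by fin_cases i <;> simp [h0, h1], by simp [Fin.sum_univ_two]⟩

lemma isProbVec_e₁ : IsProbVec ![(1 : ℝ), 0] := by
  simpa using isProbVec_pair (c := 1) zero_le_one le_rfl

lemma isProbVec_u₂ : IsProbVec ![(1 : ℝ) / 2, 1 / 2] := by
  convert isProbVec_pair (c := 1 / 2) (by norm_num) (by norm_num) using 3
  norm_num

lemma isProbVec_one : IsProbVec fun _ : Fin 1 => (1 : ℝ) :=
  ⟨fun _ => zero_le_one, by simp⟩

section Kron

variable {n m : ℕ}

@[simp]
lemma kron_apply_finProdFinEquiv (p : Fin n → ℝ) (q : Fin m → ℝ) (i : Fin n) (j : Fin m) :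
    kron p q (finProdFinEquiv (i, j)) = p i * q j := by
  simp [kron]

lemma sum_kron (p : Fin n → ℝ) (q : Fin m → ℝ) :
    ∑ k, kron p q k = (∑ i, p i) * ∑ j, q j := by
  rw [← finProdFinEquiv.sum_comp, Fintype.sum_prod_type, sum_mul_sum]
  simp

lemma IsProbVec.kron {p : Fin n → ℝ} {q : Fin m → ℝ} (hp : IsProbVec p) (hq : IsProbVec q) :
    IsProbVec (kron p q) :=
  ⟨fun _ => mul_nonneg (hp.1 _) (hq.1 _), by rw [sum_kron, hp.2, hq.2, mul_one]⟩

noncomputable def kronPow (p : Fin n → ℝ) : (m : ℕ) → Fin (n ^ m) → ℝ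
  | 0 => fun _ => 1
  | m + 1 => kron (kronPow p m) p

lemma kronPow_nonneg {p : Fin n → ℝ} (hp : ∀ i, 0 ≤ p i) (m : ℕ) (j : Fin (n ^ m)) :
    0 ≤ kronPow p m j := by
  induction m with
  | zero => exact zero_le_one
  | succ m ih => exact mul_nonneg (ih _) (hp _)

lemma IsProbVec.kronPow {p : Fin n → ℝ} (hp : IsProbVec p) (m : ℕ) :
    IsProbVec (kronPow p m) := by
  induction m with
  | zero =>
    refine ⟨fun _ => zero_le_one, ?_⟩
    simp only [_root_.kronPow, sum_const, card_fin, pow_zero, nsmul_eq_mul]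
    simp
  | succ m ih => exact ih.kron hp

lemma exists_kronPow_apply_eq (p q : Fin n → ℝ) (i : Fin n) (m : ℕ) :
    ∃ j, kronPow p m j = p i ^ m ∧ kronPow q m j = q i ^ m := by
  induction m with
  | zero => exact ⟨⟨0, by simp⟩, by simp [kronPow]⟩
  | succ m ih =>
    obtain ⟨j, hpj, hqj⟩ := ih
    exact ⟨finProdFinEquiv (j, i), by simp [kronPow, hpj, hqj, pow_succ]⟩

lemma kronPow_le {a : ℝ} {p q : Fin n → ℝ} (ha : 0 ≤ a) (hp : ∀ i, 0 ≤ p i)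
    (h : ∀ i, a * p i ≤ q i) (m : ℕ) (j : Fin (n ^ m)) :
    a ^ m * kronPow p m j ≤ kronPow q m j := by
  induction m with
  | zero => simp [kronPow]
  | succ m ih =>
    have hpow := mul_nonneg (pow_nonneg ha m) (kronPow_nonneg hp m (finProdFinEquiv.symm j).1)
    calc a ^ (m + 1) * kronPow p (m + 1) j
        = (a ^ m * kronPow p m (finProdFinEquiv.symm j).1) *
            (a * p (finProdFinEquiv.symm j).2) := by simp only [kronPow, _root_.kron]; ring
      _ ≤ kronPow q (m + 1) j :=
        mul_le_mul (ih _) (h _) (mul_nonneg ha (hp _)) (hpow.trans (ih _))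

end Kron

section RelMaj

variable {N n : ℕ}

lemma relMaj_const_one {p q : Fin n → ℝ} (hp : IsProbVec p) (hq : IsProbVec q) :
    RelMaj p q (fun _ : Fin 1 => 1) (fun _ => 1) := by
  refine ⟨fun _ _ => 1, ⟨fun _ _ => zero_le_one, fun _ => by simp⟩, ?_, ?_⟩ <;>
    ext j <;> simp [Matrix.vecMul, dotProduct, hp.2, hq.2]

lemma vecMul_of_ite {P : Fin N → ℝ} (hP : ∑ i, P i = 1) (i₀ : Fin N) (p r : Fin n → ℝ) :
    Matrix.vecMul P (Matrix.of fun i j => if i = i₀ then p j else r j) =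
      fun j => P i₀ * p j + (1 - P i₀) * r j := by
  have hcompl : ∑ i ∈ {i₀}ᶜ, P i = 1 - P i₀ := by
    rw [← hP, Fintype.sum_eq_add_sum_compl i₀ P, add_sub_cancel_left]
  ext j
  simp only [Matrix.vecMul, dotProduct, Matrix.of_apply]
  rw [Fintype.sum_eq_add_sum_compl i₀, if_pos rfl, ← hcompl, sum_mul]
  congr 1
  exact sum_congr rfl fun i hi => by rw [if_neg (mem_compl.1 hi ∘ mem_singleton.2)]

/-- A point mass against `Q` can be processed into any `(p, q)` with `Q i₀ • p ≤ q`: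
send `i₀` to `p` and every other outcome to the residual of `q`. -/
lemma relMaj_of_apply_eq_one {P Q : Fin N → ℝ} {p q : Fin n → ℝ} {i₀ : Fin N}
    (hP : IsProbVec P) (hQ : IsProbVec Q) (hp : IsProbVec p) (hq : IsProbVec q)
    (hPi₀ : P i₀ = 1) (hQi₀ : Q i₀ < 1) (h : ∀ j, Q i₀ * p j ≤ q j) : RelMaj P Q p q := by
  set r : Fin n → ℝ := fun j => (q j - Q i₀ * p j) / (1 - Q i₀)
  have hr : IsProbVec r := hp.residual hq hQi₀ h
  refine ⟨Matrix.of fun i j => if i = i₀ then p j else r j, ⟨fun i j => ?_, fun i => ?_⟩,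
    (vecMul_of_ite hP.2 i₀ p r).trans ?_, (vecMul_of_ite hQ.2 i₀ p r).trans ?_⟩
  · simp only [Matrix.of_apply]
    split_ifs
    exacts [hp.1 j, hr.1 j]
  · simp only [Matrix.of_apply]
    split_ifs
    exacts [hp.2, hr.2]
  · ext j
    simp [hPi₀]
  · ext j
    have : 1 - Q i₀ ≠ 0 := (sub_pos.2 hQi₀).ne'
    simp only [r]
    field_simp
    ring

lemma vecMul_kron_of_ite (u : Fin n → ℝ) (v : Fin 2 → ℝ) (r : Fin n → ℝ) :
    Matrix.vecMul (kron u v) (Matrix.of fun k j =>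
        if (finProdFinEquiv.symm k).2 = 0 then if (finProdFinEquiv.symm k).1 = j then 1 else 0
        else r j) =
      fun j => v 0 * u j + v 1 * (∑ i, u i) * r j := by
  ext j
  simp only [Matrix.vecMul, dotProduct, Matrix.of_apply]
  rw [← finProdFinEquiv.sum_comp, Fintype.sum_prod_type]
  simp [Fin.sum_univ_two, sum_add_distrib, sum_mul, mul_sum, mul_comm, mul_left_comm]

/-- Tensoring with `(e₁, (c, 1 - c))` lets a channel pass from `q` to any `q' ≥ c • q`:
keep the outcome on the flag `0` and resample from the residual on the flag `1`. -/
lemma relMaj_kron_e₁_pair {p q q' : Fin n → ℝ} {c : ℝ} (hq : IsProbVec q)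
    (hq' : IsProbVec q') (hc : c < 1) (h : ∀ i, c * q i ≤ q' i) :
    RelMaj (kron p ![1, 0]) (kron q ![c, 1 - c]) p q' := by
  set r : Fin n → ℝ := fun j => (q' j - c * q j) / (1 - c)
  have hr : IsProbVec r := hq.residual hq' hc h
  refine ⟨_, ⟨fun k j => ?_, fun k => ?_⟩, (vecMul_kron_of_ite p _ r).trans ?_,
    (vecMul_kron_of_ite q _ r).trans ?_⟩
  · simp only [Matrix.of_apply]
    split_ifs
    exacts [zero_le_one, le_rfl, hr.1 j]
  · simp only [Matrix.of_apply]
    split_ifs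
    exacts [by simp, hr.2]
  · ext j
    simp
  · ext j
    have : 1 - c ≠ 0 := (sub_pos.2 hc).ne'
    simp only [r, Matrix.cons_val_zero, Matrix.cons_val_one, hq.2, mul_one]
    field_simp
    ring

end RelMaj

lemma le_of_forall_natCast_mul_le_add {x L C : ℝ} (h : ∀ m : ℕ, 0 < m → m * x ≤ m * L + C) :
    x ≤ L := by
  by_contra! hlt
  obtain ⟨m, hm⟩ := exists_nat_gt (C / (x - L))
  rw [div_lt_iff₀ (sub_pos.2 hlt)] at hm
  have := h (m + 1) m.succ_pos
  push_cast at this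
  nlinarith

lemma ENNReal.abs_toReal_sub_le_of_le_add {a b : ℝ≥0∞} {L : ℝ} (hL : 0 ≤ L)
    (hab : a ≤ b + ENNReal.ofReal L) (hba : b ≤ a + ENNReal.ofReal L) :
    |a.toReal - b.toReal| ≤ L := by
  rcases eq_or_ne a ⊤ with rfl | ha
  · have hb : b = ⊤ := by simpa using hab
    simp [hb, hL]
  have hb : b ≠ ⊤ := ne_top_of_le_ne_top (by finiteness) hba
  have key : ∀ {x y : ℝ≥0∞}, x ≠ ⊤ → y ≠ ⊤ → x ≤ y + ENNReal.ofReal L →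
      x.toReal ≤ y.toReal + L := fun hx hy hxy => by
    simpa [ENNReal.toReal_add hy ENNReal.ofReal_ne_top, hL] using
      ENNReal.toReal_mono (by finiteness) hxy
  rw [abs_sub_le_iff]
  constructor <;> linarith [key ha hb hab, key hb ha hba]

lemma sub_apply_le_dist {n : ℕ} (a b : Fin n → ℝ) (i : Fin n) : a i - b i ≤ dist a b :=
  (le_abs_self _).trans (Real.dist_eq (a i) (b i) ▸ dist_le_pi_dist a b i)

lemma le_one_add_dist_div_mul {n : ℕ} {a b : Fin n → ℝ} {μ : ℝ} (hμ : 0 < μ)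
    (hb : ∀ i, μ ≤ b i) (i : Fin n) : a i ≤ (1 + dist a b / μ) * b i := by
  have hab := sub_apply_le_dist a b i
  have hdist : dist a b ≤ dist a b / μ * b i := by
    calc dist a b = dist a b / μ * μ := (div_mul_cancel₀ _ hμ.ne').symm
      _ ≤ dist a b / μ * b i := by gcongr; exact hb i
  linarith

lemma half_pow_le_pow_of_logb_inv_le {c : ℝ} (hc : 0 < c) {m k : ℕ}
    (h : m * Real.logb 2 c⁻¹ ≤ k) : (1 / 2 : ℝ) ^ k ≤ c ^ m := by
  have hcm : c⁻¹ ^ m ≤ 2 ^ k := by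
    rw [← Real.rpow_natCast 2 k, ← Real.logb_le_iff_le_rpow one_lt_two (by positivity),
      Real.logb_pow]
    exact h
  simpa [inv_pow] using inv_anti₀ (by positivity) hcm

namespace IsRelativeEntropy

variable {D : (n : ℕ) → (Fin n → ℝ) → (Fin n → ℝ) → ℝ≥0∞} {n : ℕ}

lemma apply_e₁_u₂ (hD : IsRelativeEntropy D) : D 2 ![1, 0] ![1 / 2, 1 / 2] = 1 := by
  rw [hD.normalized, Real.logb_self_eq_one one_lt_two, ENNReal.ofReal_one]

lemma apply_one_one (hD : IsRelativeEntropy D) : D 1 (fun _ => 1) (fun _ => 1) = 0 := by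
  have hle : D 1 (fun _ => 1) (fun _ => 1) ≤ 1 :=
    hD.apply_e₁_u₂ ▸ hD.dpi _ _ _ _ isProbVec_e₁ isProbVec_u₂ isProbVec_one isProbVec_one
      (relMaj_const_one isProbVec_e₁ isProbVec_u₂)
  have hadd := hD.additive _ _ _ _ isProbVec_one isProbVec_one isProbVec_one isProbVec_one
  have hkron : kron (fun _ : Fin 1 => (1 : ℝ)) (fun _ : Fin 1 => 1) = fun _ => 1 := by
    ext k
    simp [kron]
  rw [hkron] at hadd
  exact (ENNReal.add_right_inj (ne_top_of_le_ne_top ENNReal.one_ne_top hle)).1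
    (hadd.symm.trans (add_zero _).symm)

lemma apply_kronPow (hD : IsRelativeEntropy D) {p q : Fin n → ℝ} (hp : IsProbVec p)
    (hq : IsProbVec q) (m : ℕ) :
    D (n ^ m) (kronPow p m) (kronPow q m) = m * D n p q := by
  induction m with
  | zero =>
    show D 1 (fun _ => 1) (fun _ => 1) = _
    simp [hD.apply_one_one]
  | succ m ih =>
    show D (n ^ m * n) (kron (kronPow p m) p) (kron (kronPow q m) q) = _
    rw [hD.additive _ _ _ _ (hp.kronPow m) (hq.kronPow m) hp hq, ih]
    push_cast
    ring

lemma le_of_half_pow_mul_le (hD : IsRelativeEntropy D) {p q : Fin n → ℝ} (hp : IsProbVec p)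
    (hq : IsProbVec q) {k : ℕ} (hk : 0 < k) (h : ∀ j, (1 / 2) ^ k * p j ≤ q j) :
    D n p q ≤ k := by
  obtain ⟨i₀, hPi₀, hQi₀⟩ := exists_kronPow_apply_eq ![(1 : ℝ), 0] ![1 / 2, 1 / 2] 0 k
  simp only [Matrix.cons_val_zero, one_pow] at hPi₀ hQi₀
  have hrel : RelMaj (kronPow ![1, 0] k) (kronPow ![1 / 2, 1 / 2] k) p q :=
    relMaj_of_apply_eq_one (isProbVec_e₁.kronPow k) (isProbVec_u₂.kronPow k) hp hq hPi₀
      (hQi₀ ▸ pow_lt_one₀ (by norm_num) (by norm_num) hk.ne') (hQi₀ ▸ h)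
  calc D n p q ≤ D (2 ^ k) (kronPow ![1, 0] k) (kronPow ![1 / 2, 1 / 2] k) :=
        hD.dpi _ _ _ _ (isProbVec_e₁.kronPow k) (isProbVec_u₂.kronPow k) hp hq hrel
    _ = k := by rw [hD.apply_kronPow isProbVec_e₁ isProbVec_u₂, hD.apply_e₁_u₂, mul_one]

/-- Amortisation: `m 𝔻(e₁‖(c, 1 - c)) = 𝔻(e₁^{⊗m}‖(c, 1 - c)^{⊗m}) ≤ ⌈m log c⁻¹⌉ + 1`. -/
lemma apply_e₁_pair_le (hD : IsRelativeEntropy D) {c : ℝ} (hc0 : 0 < c) (hc1 : c ≤ 1) :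
    D 2 ![1, 0] ![c, 1 - c] ≤ ENNReal.ofReal (Real.logb 2 c⁻¹) := by
  set L := Real.logb 2 c⁻¹
  have hL : 0 ≤ L := Real.logb_nonneg one_lt_two (one_le_inv₀ hc0 |>.2 hc1)
  have hpair : IsProbVec ![c, 1 - c] := isProbVec_pair hc0.le hc1
  have hbound : ∀ m : ℕ, 0 < m → m * D 2 ![1, 0] ![c, 1 - c] ≤ (⌈m * L⌉₊ + 1 : ℕ) := by
    intro m hm
    have hk := half_pow_le_pow_of_logb_inv_le hc0 (k := ⌈m * L⌉₊ + 1)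
      ((Nat.le_ceil (m * L)).trans (by push_cast; linarith))
    have hdom : ∀ i, c * ![(1 : ℝ), 0] i ≤ ![c, 1 - c] i := fun i => by
      fin_cases i <;> simp [hc1]
    rw [← hD.apply_kronPow isProbVec_e₁ hpair]
    refine hD.le_of_half_pow_mul_le (isProbVec_e₁.kronPow m) (hpair.kronPow m)
      (Nat.succ_pos _) fun j => ?_
    exact (mul_le_mul_of_nonneg_right hk (kronPow_nonneg isProbVec_e₁.1 m j)).trans
      (kronPow_le hc0.le isProbVec_e₁.1 hdom m j)
  have hne : D 2 ![1, 0] ![c, 1 - c] ≠ ⊤ := by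
    have h₁ := hbound 1 one_pos
    rw [Nat.cast_one, one_mul] at h₁
    exact ne_top_of_le_ne_top (ENNReal.natCast_ne_top _) h₁
  rw [← ENNReal.ofReal_toReal hne]
  refine ENNReal.ofReal_le_ofReal (le_of_forall_natCast_mul_le_add (C := 2) fun m hm => ?_)
  have h := ENNReal.toReal_mono (by simp) (hbound m hm)
  rw [ENNReal.toReal_mul, ENNReal.toReal_natCast, ENNReal.toReal_natCast] at h
  push_cast at h
  linarith [Nat.ceil_lt_add_one (by positivity : 0 ≤ (m : ℝ) * L)]

lemma apply_le_add_of_mul_le (hD : IsRelativeEntropy D) {p q q' : Fin n → ℝ}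
    (hp : IsProbVec p) (hq : IsProbVec q) (hq' : IsProbVec q') {c : ℝ} (hc0 : 0 < c)
    (hc1 : c ≤ 1) (h : ∀ i, c * q i ≤ q' i) :
    D n p q' ≤ D n p q + ENNReal.ofReal (Real.logb 2 c⁻¹) := by
  rcases hc1.eq_or_lt with rfl | hc1
  · rw [hq.eq_of_le hq' (by simpa using h)]
    exact le_self_add
  have hpair : IsProbVec ![c, 1 - c] := isProbVec_pair hc0.le hc1.le
  calc D n p q' ≤ D (n * 2) (kron p ![1, 0]) (kron q ![c, 1 - c]) :=
        hD.dpi _ _ _ _ (hp.kron isProbVec_e₁) (hq.kron hpair) hp hq'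
          (relMaj_kron_e₁_pair hq hq' hc1 h)
    _ = D n p q + D 2 ![1, 0] ![c, 1 - c] := hD.additive _ _ _ _ hp hq isProbVec_e₁ hpair
    _ ≤ D n p q + ENNReal.ofReal (Real.logb 2 c⁻¹) := by
        gcongr
        exact hD.apply_e₁_pair_le hc0 hc1.le

lemma apply_ne_top (hD : IsRelativeEntropy D) {p q : Fin n → ℝ} (hp : IsProbVec p)
    (hq : IsProbVec q) (hqpos : ∀ i, 0 < q i) : D n p q ≠ ⊤ := by
  have := hp.nonempty
  obtain ⟨k, hk⟩ := exists_pow_lt_of_lt_one (minEntry_pos hqpos) (by norm_num : (1 / 2 : ℝ) < 1)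
  refine ne_top_of_le_ne_top (ENNReal.natCast_ne_top (k + 1))
    (hD.le_of_half_pow_mul_le hp hq k.succ_pos fun j => ?_)
  calc (1 / 2 : ℝ) ^ (k + 1) * p j ≤ (1 / 2) ^ k * 1 :=
        mul_le_mul (pow_le_pow_of_le_one (by norm_num) (by norm_num) k.le_succ) (hp.le_one j)
          (hp.1 j) (by positivity)
    _ ≤ q j := by linarith [minEntry_le q j]

lemma abs_toReal_sub_le (hD : IsRelativeEntropy D) {p q q' : Fin n → ℝ} (hp : IsProbVec p)
    (hq : IsProbVec q) (hq' : IsProbVec q') {μ : ℝ} (hμ : 0 < μ) (hμq : ∀ i, μ ≤ q i)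
    (hμq' : ∀ i, μ ≤ q' i) :
    |(D n p q).toReal - (D n p q').toReal| ≤ Real.logb 2 (1 + dist q q' / μ) := by
  have ht : 1 ≤ 1 + dist q q' / μ := le_add_of_nonneg_right (by positivity)
  have hc0 : 0 < (1 + dist q q' / μ)⁻¹ := by positivity
  have hc1 : (1 + dist q q' / μ)⁻¹ ≤ 1 := inv_le_one_of_one_le₀ ht
  have hdom : ∀ {a b : Fin n → ℝ}, (∀ i, μ ≤ b i) → dist a b = dist q q' →
      ∀ i, (1 + dist q q' / μ)⁻¹ * a i ≤ b i := fun hb hab i => by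
    rw [inv_mul_le_iff₀ (by positivity), ← hab]
    exact le_one_add_dist_div_mul hμ hb i
  have h₁ := hD.apply_le_add_of_mul_le hp hq hq' hc0 hc1 (hdom hμq' rfl)
  have h₂ := hD.apply_le_add_of_mul_le hp hq' hq hc0 hc1 (hdom hμq (dist_comm _ _))
  rw [inv_inv] at h₁ h₂
  exact ENNReal.abs_toReal_sub_le_of_le_add (Real.logb_nonneg one_lt_two ht) h₂ h₁

lemma continuousWithinAt_apply (hD : IsRelativeEntropy D) {p q₀ : Fin n → ℝ} (hp : IsProbVec p)
    (hq₀ : IsProbVec q₀) (hq₀pos : ∀ i, 0 < q₀ i) :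
    ContinuousWithinAt (fun q => D n p q) { q | IsProbVec q ∧ ∀ i, 0 < q i } q₀ := by
  have := hp.nonempty
  set μ₀ := minEntry q₀
  have hμ₀ : 0 < μ₀ := minEntry_pos hq₀pos
  have hbound : Filter.Tendsto (fun q => Real.logb 2 (1 + dist q q₀ / (μ₀ - dist q q₀)))
      (nhds q₀) (nhds 0) := by
    have hcont : ContinuousAt (fun q => Real.logb 2 (1 + dist q q₀ / (μ₀ - dist q q₀))) q₀ := by
      refine ContinuousAt.logb ?_ (by simp)
      exact continuousAt_const.add
        (ContinuousAt.div (by fun_prop) (by fun_prop) (by simpa using hμ₀.ne'))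
    simpa using hcont.tendsto
  have htoReal : ContinuousWithinAt (fun q => (D n p q).toReal)
      { q | IsProbVec q ∧ ∀ i, 0 < q i } q₀ := by
    refine tendsto_iff_dist_tendsto_zero.2 (squeeze_zero' (Filter.Eventually.of_forall
      fun _ => dist_nonneg) ?_ (hbound.mono_left nhdsWithin_le_nhds))
    filter_upwards [self_mem_nhdsWithin, mem_nhdsWithin_of_mem_nhds (Metric.ball_mem_nhds q₀ hμ₀)]
      with q hq hball
    rw [Real.dist_eq]
    refine hD.abs_toReal_sub_le hp hq.1 hq₀ (sub_pos.2 hball) (fun i => ?_) (fun i => ?_)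
    · linarith [minEntry_le q₀ i, sub_apply_le_dist q₀ q i, dist_comm q q₀]
    · linarith [minEntry_le q₀ i, dist_nonneg (x := q) (y := q₀)]
  refine (ENNReal.continuous_ofReal.continuousAt.comp_continuousWithinAt htoReal).congr
    (fun q hq => ?_) ?_
  · exact (ENNReal.ofReal_toReal (hD.apply_ne_top hp hq.1 hq.2)).symm
  · exact (ENNReal.ofReal_toReal (hD.apply_ne_top hp hq₀ hq₀pos)).symm

end IsRelativeEntropy

/-- Lipschitz-type continuity of `q ↦ 𝔻(p‖q)` on `P_{>0}(n)`:
whenever `‖q − q̃‖_∞ < min{min_i q_i, min_i q̃_i}`, both values are finite and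
`|𝔻(p‖q) − 𝔻(p‖q̃)| ≤ log(1 + ‖q − q̃‖_∞ / min{min_i q_i, min_i q̃_i})`
(binary logarithm); in particular `q ↦ 𝔻(p‖q)` is continuous on `P_{>0}(n)`. -/
theorem stmt7 (D : (n : ℕ) → (Fin n → ℝ) → (Fin n → ℝ) → ℝ≥0∞)
    (hD : IsRelativeEntropy D) (n : ℕ) (p : Fin n → ℝ) (hp : IsProbVec p) :
    (∀ q qt : Fin n → ℝ, IsProbVec q → (∀ i, 0 < q i) → IsProbVec qt → (∀ i, 0 < qt i) →
      supDist q qt < min (minEntry q) (minEntry qt) →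
      D n p q ≠ ⊤ ∧ D n p qt ≠ ⊤ ∧
        |(D n p q).toReal - (D n p qt).toReal| ≤
          Real.logb 2 (1 + supDist q qt / min (minEntry q) (minEntry qt))) ∧
    ContinuousOn (fun q => D n p q) { q : Fin n → ℝ | IsProbVec q ∧ ∀ i, 0 < q i } := by
  refine ⟨fun q qt hq hqpos hqt hqtpos _ => ?_,
    fun q₀ hq₀ => hD.continuousWithinAt_apply hp hq₀.1 hq₀.2⟩
  have := hp.nonempty
  refine ⟨hD.apply_ne_top hp hq hqpos, hD.apply_ne_top hp hqt hqtpos, ?_⟩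
  rw [supDist_eq_dist]
  exact hD.abs_toReal_sub_le hp hq hqt (lt_min (minEntry_pos hqpos) (minEntry_pos hqtpos))
    (fun i => (min_le_left _ _).trans (minEntry_le q i))
    (fun i => (min_le_right _ _).trans (minEntry_le qt i))
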